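/- For any positive integer n and any y with yq^i ≠ 1 for 1 ≤ i ≤ n: sum_{i=1}^n [n choose i]_q (-1)^(i-1) q^(binom(i+1,2)) / (1 - y q^i) = sum_{i=1}^n q^i (q;q)_{i-1} / (yq;q)_i. -/

import Mathlib

/-- The q-Pochhammer symbol `(z;q)_n = (1-z)(1-zq)⋯(1-zq^{n-1})`. -/
def qPoch {K : Type*} [Field K] (z q : K) (n : ℕ) : K :=
  ∏ j ∈ Finset.range n, (1 - z * q ^ j)

/-- The Gaussian binomial coefficient `[n choose i]_q`. -/
def gauss {K : Type*} [Field K] (q : K) (n i : ℕ) : K :=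
  qPoch q q n / (qPoch q q i * qPoch q q (n - i))

section Aux
variable {K : Type*} [Field K]

lemma qPoch_succ (z q : K) (n : ℕ) :
    qPoch z q (n + 1) = qPoch z q n * (1 - z * q ^ n) :=
  Finset.prod_range_succ _ _

lemma qPoch_succ' (z q : K) (n : ℕ) :
    qPoch z q (n + 1) = (1 - z) * qPoch (z * q) q n := by
  rw [qPoch, Finset.prod_range_succ']
  simp only [pow_zero, mul_one, qPoch]
  rw [mul_comm]
  congr 1
  apply Finset.prod_congr rfl
  intro j _
  ring

lemma qPoch_ne_zero (z q : K) (n : ℕ) (h : ∀ j < n, z * q ^ j ≠ 1) : qPoch z q n ≠ 0 := by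
  rw [qPoch]
  refine Finset.prod_ne_zero_iff.2 fun j hj => sub_ne_zero.2 fun h' => ?_
  exact h j (Finset.mem_range.1 hj) h'.symm

lemma qq_ne_zero (q : K) (n : ℕ) (hq : ∀ i, 1 ≤ i → i ≤ n → q ^ i ≠ 1) :
    qPoch q q n ≠ 0 := by
  refine qPoch_ne_zero q q n fun j hj => ?_
  rw [← pow_succ']
  exact hq (j + 1) (Nat.le_add_left 1 j) hj

lemma qPoch_zero (z q : K) : qPoch z q 0 = 1 := Finset.prod_range_zero _

lemma gauss_self (q : K) (n : ℕ) (hq : ∀ i, 1 ≤ i → i ≤ n → q ^ i ≠ 1) :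
    gauss q n n = 1 := by
  rw [gauss, Nat.sub_self, qPoch_zero, mul_one, div_self (qq_ne_zero q n hq)]

lemma gauss_zero (q : K) (n : ℕ) (hq : ∀ i, 1 ≤ i → i ≤ n → q ^ i ≠ 1) :
    gauss q n 0 = 1 := by
  rw [gauss, Nat.sub_zero, qPoch_zero, one_mul, div_self (qq_ne_zero q n hq)]

lemma gauss_pascal (q : K) (k m : ℕ) (hq : ∀ i, 1 ≤ i → i ≤ k + m + 2 → q ^ i ≠ 1) :
    gauss q (k + m + 2) (k + 1) = gauss q (k + m + 1) (k + 1) + q ^ (m + 1) * gauss q (k + m + 1) k := by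
  have hk : qPoch q q k ≠ 0 := qq_ne_zero q k (fun i h1 h2 => hq i h1 (by omega))
  have hm : qPoch q q m ≠ 0 := qq_ne_zero q m (fun i h1 h2 => hq i h1 (by omega))
  have hk1 : (1 : K) - q ^ (k + 1) ≠ 0 := sub_ne_zero.2 fun h => hq (k + 1) (by omega) (by omega) h.symm
  have hm1 : (1 : K) - q ^ (m + 1) ≠ 0 := sub_ne_zero.2 fun h => hq (m + 1) (by omega) (by omega) h.symm
  have e1 : k + m + 2 - (k + 1) = m + 1 := by omega
  have e2 : k + m + 1 - (k + 1) = m := by omega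
  have e3 : k + m + 1 - k = m + 1 := by omega
  rw [gauss, gauss, gauss, e1, e2, e3]
  rw [show k + m + 2 = (k + m + 1) + 1 from rfl, qPoch_succ q q (k + m + 1),
    qPoch_succ q q k, qPoch_succ q q m]
  rw [show q * q ^ (k + m + 1) = q ^ (k + m + 2) by rw [← pow_succ']]
  rw [show q * q ^ k = q ^ (k + 1) by rw [← pow_succ']]
  rw [show q * q ^ m = q ^ (m + 1) by rw [← pow_succ']]
  field_simp
  ring

lemma tri_succ (j : ℕ) : (j + 1) * (j + 2) / 2 = j * (j + 1) / 2 + (j + 1) := by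
  have h : (j + 1) * (j + 2) = j * (j + 1) + (j + 1) * 2 := by ring
  rw [h, Nat.add_mul_div_right _ _ (by norm_num : 0 < 2)]

lemma gauss_dec (q : K) (n : ℕ) (hq : ∀ i, 1 ≤ i → i ≤ n + 1 → q ^ i ≠ 1)
    (j : ℕ) (hj : j ≤ n) :
    gauss q (n + 1) (j + 1)
      = (if j + 1 ≤ n then gauss q n (j + 1) else 0) + q ^ (n - j) * gauss q n j := by
  rcases Nat.lt_or_ge j n with h | h
  · rw [if_pos (by omega)]
    have := gauss_pascal q j (n - 1 - j) (by
      intro i h1 h2; exact hq i h1 (by omega))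
    rw [show j + (n - 1 - j) + 2 = n + 1 by omega, show j + (n - 1 - j) + 1 = n by omega,
      show n - 1 - j + 1 = n - j by omega] at this
    rw [this]
  · have hjn : j = n := le_antisymm hj h
    subst hjn
    rw [if_neg (by omega), Nat.sub_self, pow_zero, one_mul, zero_add]
    rw [gauss_self q (j + 1) hq, gauss_self q j (fun i h1 h2 => hq i h1 (by omega))]

/-- The key partial-fraction identity. -/
lemma key (q : K) (n : ℕ) (hq : ∀ i, 1 ≤ i → i ≤ n → q ^ i ≠ 1) :
    ∀ y : K, (∀ i, 1 ≤ i → i ≤ n + 1 → y * q ^ i ≠ 1) →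
    ∑ j ∈ Finset.range (n + 1),
        gauss q n j * (-1 : K) ^ j * q ^ (j * (j + 1) / 2) / (1 - y * q ^ (j + 1))
      = qPoch q q n / qPoch (y * q) q (n + 1) := by
  induction n with
  | zero =>
    intro y hy
    simp [gauss, qPoch]
  | succ n ih =>
    intro y hy
    have hq' : ∀ i, 1 ≤ i → i ≤ n → q ^ i ≠ 1 := fun i h1 h2 => hq i h1 (by omega)
    rw [Finset.sum_range_succ']
    have hf0 : gauss q (n + 1) 0 * (-1 : K) ^ 0 * q ^ (0 * (0 + 1) / 2) / (1 - y * q ^ (0 + 1))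
        = gauss q n 0 * (-1 : K) ^ 0 * q ^ (0 * (0 + 1) / 2) / (1 - y * q ^ (0 + 1)) := by
      rw [gauss_zero q (n + 1) hq, gauss_zero q n hq']
    have step1 : ∑ j ∈ Finset.range (n + 1),
          gauss q (n + 1) (j + 1) * (-1 : K) ^ (j + 1) * q ^ ((j + 1) * (j + 1 + 1) / 2) / (1 - y * q ^ (j + 1 + 1))
        = (∑ j ∈ Finset.range (n + 1),
            if j + 1 ≤ n then gauss q n (j + 1) * (-1 : K) ^ (j + 1) * q ^ ((j + 1) * (j + 1 + 1) / 2) / (1 - y * q ^ (j + 1 + 1)) else 0)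
          + ∑ j ∈ Finset.range (n + 1),
            q ^ (n - j) * gauss q n j * (-1 : K) ^ (j + 1) * q ^ ((j + 1) * (j + 1 + 1) / 2) / (1 - y * q ^ (j + 1 + 1)) := by
      rw [← Finset.sum_add_distrib]
      refine Finset.sum_congr rfl fun j hj => ?_
      rw [gauss_dec q n hq j (Nat.lt_succ_iff.1 (Finset.mem_range.1 hj))]
      split_ifs with h
      · ring
      · ring
    have second : ∑ j ∈ Finset.range (n + 1),
          q ^ (n - j) * gauss q n j * (-1 : K) ^ (j + 1) * q ^ ((j + 1) * (j + 1 + 1) / 2) / (1 - y * q ^ (j + 1 + 1))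
        = -(q ^ (n + 1) * (qPoch q q n / qPoch (y * q * q) q (n + 1))) := by
      have hterm : ∀ j ∈ Finset.range (n + 1),
          q ^ (n - j) * gauss q n j * (-1 : K) ^ (j + 1) * q ^ ((j + 1) * (j + 1 + 1) / 2) / (1 - y * q ^ (j + 1 + 1))
          = -(q ^ (n + 1)) * (gauss q n j * (-1 : K) ^ j * q ^ (j * (j + 1) / 2) / (1 - y * q * q ^ (j + 1))) := by
        intro j hj
        have hj' : j ≤ n := Nat.lt_succ_iff.1 (Finset.mem_range.1 hj)
        have hpow : q ^ (n - j) * q ^ ((j + 1) * (j + 1 + 1) / 2) = q ^ (n + 1) * q ^ (j * (j + 1) / 2) := by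
          rw [← pow_add, ← pow_add]
          congr 1
          have h2 : (j + 1) * (j + 1 + 1) / 2 = j * (j + 1) / 2 + (j + 1) := tri_succ j
          rw [h2]
          omega
        have hden : (1 : K) - y * q ^ (j + 1 + 1) = 1 - y * q * q ^ (j + 1) := by
          rw [pow_succ']; ring
        rw [hden]
        have hD : (1 : K) - y * q * q ^ (j + 1) ≠ 0 := by
          refine sub_ne_zero.2 fun h => ?_
          refine hy (j + 2) (by omega) (by omega) ?_
          rw [show j + 2 = (j + 1) + 1 from rfl, pow_succ', ← mul_assoc]
          exact h.symm
        field_simp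
        linear_combination (-(gauss q n j * (-1 : K) ^ j)) * hpow
      rw [Finset.sum_congr rfl hterm, ← Finset.mul_sum]
      have hy' : ∀ i, 1 ≤ i → i ≤ n + 1 → (y * q) * q ^ i ≠ 1 := by
        intro i h1 h2
        have h := hy (i + 1) (by omega) (by omega)
        rw [pow_succ'] at h
        rwa [mul_assoc]
      rw [ih hq' (y * q) hy']
      ring
    rw [step1, second, hf0, add_right_comm]
    have first : (∑ j ∈ Finset.range (n + 1),
          if j + 1 ≤ n then gauss q n (j + 1) * (-1 : K) ^ (j + 1) * q ^ ((j + 1) * (j + 1 + 1) / 2) / (1 - y * q ^ (j + 1 + 1)) else 0)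
          + gauss q n 0 * (-1 : K) ^ 0 * q ^ (0 * (0 + 1) / 2) / (1 - y * q ^ (0 + 1))
        = qPoch q q n / qPoch (y * q) q (n + 1) := by
      rw [Finset.sum_range_succ, if_neg (by omega), add_zero]
      have hco : ∀ j ∈ Finset.range n,
          (if j + 1 ≤ n then gauss q n (j + 1) * (-1 : K) ^ (j + 1) * q ^ ((j + 1) * (j + 1 + 1) / 2) / (1 - y * q ^ (j + 1 + 1)) else 0)
          = gauss q n (j + 1) * (-1 : K) ^ (j + 1) * q ^ ((j + 1) * (j + 1 + 1) / 2) / (1 - y * q ^ (j + 1 + 1)) :=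
        fun j hj => if_pos (Finset.mem_range.1 hj)
      rw [Finset.sum_congr rfl hco,
        ← Finset.sum_range_succ' (fun j => gauss q n j * (-1 : K) ^ j * q ^ (j * (j + 1) / 2) / (1 - y * q ^ (j + 1))) n]
      exact ih hq' y (fun i h1 h2 => hy i h1 (by omega))
    rw [first]
    have h1y : (1 : K) - y * q ≠ 0 := by
      refine sub_ne_zero.2 fun h => ?_
      exact hy 1 le_rfl (by omega) (by rw [pow_one]; exact h.symm)
    have hR : qPoch (y * q * q) q n ≠ 0 := by
      refine qPoch_ne_zero _ _ _ fun j hj h => ?_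
      refine hy (j + 2) (by omega) (by omega) ?_
      rw [show j + 2 = (j + 1) + 1 from rfl, pow_succ', pow_succ', ← mul_assoc, ← mul_assoc]
      exact h
    have h2y : (1 : K) - y * q * q * q ^ n ≠ 0 := by
      refine sub_ne_zero.2 fun h => ?_
      refine hy (n + 2) (by omega) (by omega) ?_
      rw [show n + 2 = (n + 1) + 1 from rfl, pow_succ', pow_succ', ← mul_assoc, ← mul_assoc]
      exact h.symm
    rw [show n + 1 + 1 = (n + 1) + 1 from rfl, qPoch_succ' (y * q) q (n + 1),
      qPoch_succ (y * q * q) q n, qPoch_succ' (y * q) q n, qPoch_succ q q n]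
    have hR2 : qPoch (y * q ^ 2) q n ≠ 0 := by rw [pow_two, ← mul_assoc]; exact hR
    have h2y2 : (1 : K) - y * q ^ 2 * q ^ n ≠ 0 := by rw [pow_two, ← mul_assoc]; exact h2y
    field_simp
    ring

lemma main' (q y : K) (n : ℕ) (hn : 1 ≤ n)
    (hq : ∀ i, 1 ≤ i → i ≤ n → q ^ i ≠ 1)
    (hy : ∀ i, 1 ≤ i → i ≤ n → y * q ^ i ≠ 1) :
    ∑ j ∈ Finset.range n,
        gauss q n (j + 1) * (-1 : K) ^ j * q ^ ((j + 1) * (j + 1 + 1) / 2) / (1 - y * q ^ (j + 1))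
      = ∑ j ∈ Finset.range n, q ^ (j + 1) * qPoch q q j / qPoch (y * q) q (j + 1) := by
  induction n with
  | zero => omega
  | succ n ih =>
    rcases Nat.eq_zero_or_pos n with rfl | hn'
    · rw [Finset.sum_range_one, Finset.sum_range_one, gauss_self q (0 + 1) hq]
      simp [qPoch]
    · have hq' : ∀ i, 1 ≤ i → i ≤ n → q ^ i ≠ 1 := fun i h1 h2 => hq i h1 (by omega)
      have hy' : ∀ i, 1 ≤ i → i ≤ n → y * q ^ i ≠ 1 := fun i h1 h2 => hy i h1 (by omega)
      have hsplit : ∑ j ∈ Finset.range (n + 1),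
            gauss q (n + 1) (j + 1) * (-1 : K) ^ j * q ^ ((j + 1) * (j + 1 + 1) / 2) / (1 - y * q ^ (j + 1))
          = (∑ j ∈ Finset.range (n + 1),
              if j + 1 ≤ n then gauss q n (j + 1) * (-1 : K) ^ j * q ^ ((j + 1) * (j + 1 + 1) / 2) / (1 - y * q ^ (j + 1)) else 0)
            + ∑ j ∈ Finset.range (n + 1),
              q ^ (n - j) * gauss q n j * (-1 : K) ^ j * q ^ ((j + 1) * (j + 1 + 1) / 2) / (1 - y * q ^ (j + 1)) := by
        rw [← Finset.sum_add_distrib]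
        refine Finset.sum_congr rfl fun j hj => ?_
        rw [gauss_dec q n hq j (Nat.lt_succ_iff.1 (Finset.mem_range.1 hj))]
        split_ifs with h
        · ring
        · ring
      have hfirst : (∑ j ∈ Finset.range (n + 1),
            if j + 1 ≤ n then gauss q n (j + 1) * (-1 : K) ^ j * q ^ ((j + 1) * (j + 1 + 1) / 2) / (1 - y * q ^ (j + 1)) else 0)
          = ∑ j ∈ Finset.range n,
            gauss q n (j + 1) * (-1 : K) ^ j * q ^ ((j + 1) * (j + 1 + 1) / 2) / (1 - y * q ^ (j + 1)) := by
        rw [Finset.sum_range_succ, if_neg (by omega), add_zero]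
        exact Finset.sum_congr rfl fun j hj => if_pos (Finset.mem_range.1 hj)
      have hsecond : ∑ j ∈ Finset.range (n + 1),
            q ^ (n - j) * gauss q n j * (-1 : K) ^ j * q ^ ((j + 1) * (j + 1 + 1) / 2) / (1 - y * q ^ (j + 1))
          = q ^ (n + 1) * (qPoch q q n / qPoch (y * q) q (n + 1)) := by
        have hterm : ∀ j ∈ Finset.range (n + 1),
            q ^ (n - j) * gauss q n j * (-1 : K) ^ j * q ^ ((j + 1) * (j + 1 + 1) / 2) / (1 - y * q ^ (j + 1))
            = q ^ (n + 1) * (gauss q n j * (-1 : K) ^ j * q ^ (j * (j + 1) / 2) / (1 - y * q ^ (j + 1))) := by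
          intro j hj
          have hj' : j ≤ n := Nat.lt_succ_iff.1 (Finset.mem_range.1 hj)
          have hpow : q ^ (n - j) * q ^ ((j + 1) * (j + 1 + 1) / 2) = q ^ (n + 1) * q ^ (j * (j + 1) / 2) := by
            rw [← pow_add, ← pow_add]
            congr 1
            rw [tri_succ j]
            omega
          have hD : (1 : K) - y * q ^ (j + 1) ≠ 0 :=
            sub_ne_zero.2 fun h => hy (j + 1) (by omega) (by omega) h.symm
          field_simp
          linear_combination (gauss q n j) * hpow
        rw [Finset.sum_congr rfl hterm, ← Finset.mul_sum,
          key q n (fun i h1 h2 => hq i h1 (by omega)) y hy]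
      rw [hsplit, hfirst, hsecond, ih hn' hq' hy', Finset.sum_range_succ]
      ring

end Aux

/-- The parametric generalization of Uchimura's identity. -/
theorem uchimura_parametric {K : Type*} [Field K] (q y : K) (n : ℕ) (hn : 1 ≤ n)
    (hq : ∀ i : ℕ, 1 ≤ i → i ≤ n → q ^ i ≠ 1)
    (hy : ∀ i : ℕ, 1 ≤ i → i ≤ n → y * q ^ i ≠ 1) :
    ∑ i ∈ Finset.Icc 1 n,
        gauss q n i * (-1 : K) ^ (i - 1) * q ^ (i * (i + 1) / 2) / (1 - y * q ^ i) =
      ∑ i ∈ Finset.Icc 1 n, q ^ i * qPoch q q (i - 1) / qPoch (y * q) q i := by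
  rw [← Finset.Ico_add_one_right_eq_Icc, Finset.sum_Ico_eq_sum_range, Finset.sum_Ico_eq_sum_range]
  rw [Nat.add_sub_cancel]
  have hL : ∀ j ∈ Finset.range n,
      gauss q n (1 + j) * (-1 : K) ^ (1 + j - 1) * q ^ ((1 + j) * (1 + j + 1) / 2) / (1 - y * q ^ (1 + j))
      = gauss q n (j + 1) * (-1 : K) ^ j * q ^ ((j + 1) * (j + 1 + 1) / 2) / (1 - y * q ^ (j + 1)) := by
    intro j _
    rw [Nat.add_comm 1 j, Nat.add_sub_cancel]
  have hR : ∀ j ∈ Finset.range n,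
      q ^ (1 + j) * qPoch q q (1 + j - 1) / qPoch (y * q) q (1 + j)
      = q ^ (j + 1) * qPoch q q j / qPoch (y * q) q (j + 1) := by
    intro j _
    rw [Nat.add_comm 1 j, Nat.add_sub_cancel]
  rw [Finset.sum_congr rfl hL, Finset.sum_congr rfl hR]
  exact main' q y n hn hq hy
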